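/- The map h is chaotic on [−1/2, 1]: there exists δ > 0 such that for every point x ∈ [−1/2, 1] and every nonempty open set V ⊆ [−1/2, 1] there is a point y ∈ V with limsup_{n→∞} |hⁿ(x) − hⁿ(y)| ≥ δ and liminf_{n→∞} |hⁿ(x) − hⁿ(y)| = 0. -/

import Mathlib

/-! On `[0, 1]` the map `h` is the tent map, and the norm of `ℝ ⧸ 2ℤ` (the distance to the nearest
even integer) semiconjugates doubling to it: `hⁿ z = ‖2ⁿ z‖`. Hence `h` is topologically exact: for
every nonempty open `W`, `hⁿ(W) ⊇ [0, 1]` once `n` is large. For each `x`, the points `y` whose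
orbit comes arbitrarily close to that of `x` infinitely often, and moves more than `1/4` away from
it infinitely often, are then a countable intersection of dense open sets, so by Baire's theorem
they meet every nonempty open set. -/

open Filter

/-- The map `h : [-1/2,1] → [-1/2,1]` given by `h(x) = -x` on `[-1/2,0]` and
`h(x) = T(x) = 1 - |2x - 1|` on `[0,1]`. -/
noncomputable def hMap (x : ℝ) : ℝ :=
  if x ≤ 0 then -x else 1 - |2 * x - 1|

open Set Topology

local notation "𝕀" => Icc (-(1 / 2) : ℝ) 1

section Baire

variable {X : Type*} [TopologicalSpace X]

theorem eventually_residual_frequently {P : ℕ → X → Prop} (hP : ∀ n, IsOpen {x | P n x})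
    (hdense : ∀ W : Set X, IsOpen W → W.Nonempty → ∃ᶠ n in atTop, ∃ x ∈ W, P n x) :
    ∀ᶠ x in residual X, ∃ᶠ n in atTop, P n x := by
  simp only [frequently_atTop]
  refine eventually_countable_forall.2 fun M => residual_of_dense_open ?_ ?_
  · convert isOpen_biUnion (s := Ici M) fun n _ => hP n using 1
    ext; simp
  · refine dense_iff_inter_open.2 fun W hW hne => ?_
    obtain ⟨n, hn, x, hxW, hx⟩ := frequently_atTop.1 (hdense W hW hne) M
    exact ⟨x, hxW, n, hn, hx⟩

variable {Y : Type*} [BaireSpace X] [PseudoMetricSpace Y]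

theorem exists_mem_frequently_dist_lt_and_frequently_lt_dist {F : ℕ → X → Y}
    (hF : ∀ n, Continuous (F n)) {δ : ℝ}
    (hexact : ∀ W : Set X, IsOpen W → W.Nonempty → ∀ᶠ n in atTop, range (F n) ⊆ F n '' W)
    (hfar : ∀ᶠ n in atTop, ∀ p ∈ range (F n), ∃ q ∈ range (F n), δ < dist p q)
    (x : X) {W : Set X} (hW : IsOpen W) (hne : W.Nonempty) :
    ∃ y ∈ W, (∀ ε > 0, ∃ᶠ n in atTop, dist (F n x) (F n y) < ε) ∧
      ∃ᶠ n in atTop, δ < dist (F n x) (F n y) := by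
  have h_near : ∀ᶠ y in residual X, ∀ k : ℕ, ∃ᶠ n in atTop, dist (F n x) (F n y) < 1 / (k + 1) :=
    eventually_countable_forall.2 fun k =>
      eventually_residual_frequently (fun n => isOpen_lt (continuous_const.dist (hF n))
        continuous_const) fun W hW hne => (hexact W hW hne).frequently.mono fun n hn => by
          obtain ⟨y, hyW, hy⟩ := hn (mem_range_self x)
          exact ⟨y, hyW, by rw [hy, dist_self]; positivity⟩
  have h_far : ∀ᶠ y in residual X, ∃ᶠ n in atTop, δ < dist (F n x) (F n y) :=
    eventually_residual_frequently (fun n => isOpen_lt continuous_const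
      (continuous_const.dist (hF n))) fun W hW hne =>
        ((hexact W hW hne).and hfar).frequently.mono fun n ⟨hsub, hfar_n⟩ => by
          obtain ⟨q, hq, hxq⟩ := hfar_n _ (mem_range_self x)
          obtain ⟨y, hyW, rfl⟩ := hsub hq
          exact ⟨y, hyW, hxq⟩
  obtain ⟨y, hyW, hy_near, hy_far⟩ :=
    (dense_of_mem_residual (h_near.and h_far)).inter_open_nonempty W hW hne
  refine ⟨y, hyW, fun ε hε => ?_, hy_far⟩
  obtain ⟨k, hk⟩ := exists_nat_one_div_lt hε
  exact (hy_near k).mono fun n hn => hn.trans hk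

end Baire

theorem AddCircle.exists_mem_Ioo_nsmul_coe_eq {p u v : ℝ} (hp : 0 < p) {m : ℕ}
    (h : p < m * (v - u)) (y : AddCircle p) : ∃ z ∈ Ioo u v, m • (z : AddCircle p) = y := by
  have := Fact.mk hp
  obtain ⟨s, hs, rfl⟩ := (AddCircle.coe_image_Ioc_eq p (m * u)).symm ▸ mem_univ y
  have hm : (0 : ℝ) < m := Nat.cast_pos.2 <| Nat.pos_of_ne_zero <| by
    rintro rfl
    simp only [CharP.cast_eq_zero, zero_mul] at h
    exact h.not_gt hp
  refine ⟨s / m, ⟨?_, ?_⟩, ?_⟩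
  · rw [lt_div_iff₀ hm]; linarith [hs.1]
  · rw [div_lt_iff₀ hm]; linarith [hs.2]
  · rw [← AddCircle.coe_nsmul, nsmul_eq_mul, mul_div_cancel₀ _ hm.ne']

theorem liminf_eq_zero_of_frequently_lt {u : ℕ → ℝ} {C : ℝ} (h0 : ∀ n, 0 ≤ u n)
    (hC : ∀ n, u n ≤ C) (h : ∀ ε > 0, ∃ᶠ n in atTop, u n < ε) : liminf u atTop = 0 := by
  refine le_antisymm (le_of_forall_pos_le_add fun ε hε => ?_)
    (le_liminf_of_le (isCoboundedUnder_ge_of_le atTop hC) (Eventually.of_forall h0))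
  rw [zero_add]
  exact liminf_le_of_frequently_le ((h ε hε).mono fun n hn => hn.le) (isBoundedUnder_of ⟨0, h0⟩)

theorem continuous_hMap : Continuous hMap :=
  Continuous.if_le continuous_neg (by fun_prop) continuous_id continuous_const
    fun x hx => by simp [hx]

theorem hMap_neg {z : ℝ} (hz : 0 ≤ z) : hMap (-z) = z := by
  simp [hMap, hz]

theorem mapsTo_hMap : MapsTo hMap 𝕀 (Icc 0 1) := by
  rintro x ⟨hx₁, hx₂⟩
  unfold hMap
  split_ifs with hx
  · constructor <;> linarith
  · constructor <;> cases abs_cases (2 * x - 1) <;> linarith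

theorem norm_coe_addCircle_two {s : ℝ} (hs : |s| ≤ 1) : ‖(s : AddCircle (2 : ℝ))‖ = |s| :=
  (AddCircle.norm_coe_eq_abs_iff 2 two_ne_zero).2 (by norm_num [hs])

theorem norm_coe_addCircle_two_of_mem_Icc {z : ℝ} (hz : z ∈ Icc (0 : ℝ) 1) :
    ‖(z : AddCircle (2 : ℝ))‖ = z := by
  rw [norm_coe_addCircle_two (abs_le.2 ⟨by linarith [hz.1], hz.2⟩), abs_of_nonneg hz.1]

theorem hMap_eq_norm_coe_two_mul {z : ℝ} (hz : z ∈ Icc (0 : ℝ) 1) :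
    hMap z = ‖((2 * z : ℝ) : AddCircle (2 : ℝ))‖ := by
  have hz₀ : hMap z = 1 - |2 * z - 1| := by
    unfold hMap
    split_ifs with h
    · simp [le_antisymm h hz.1]
    · rfl
  obtain ⟨hz₁, hz₂⟩ := hz
  rcases le_total z (1 / 2) with h | h
  · rw [norm_coe_addCircle_two (abs_le.2 ⟨by linarith, by linarith⟩), hz₀,
      abs_of_nonpos (by linarith), abs_of_nonneg (by linarith)]
    ring
  · rw [← sub_add_cancel (2 * z) 2, AddCircle.coe_add_period,
      norm_coe_addCircle_two (abs_le.2 ⟨by linarith, by linarith⟩), hz₀,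
      abs_of_nonneg (by linarith), abs_of_nonpos (by linarith)]
    ring

theorem hMap_norm (y : AddCircle (2 : ℝ)) : hMap ‖y‖ = ‖2 • y‖ := by
  have := Fact.mk (two_pos : (0 : ℝ) < 2)
  have hy : y ∈ ((↑) : ℝ → AddCircle (2 : ℝ)) '' Icc (-1) (-1 + 2) := by
    rw [AddCircle.coe_image_Icc_eq]; trivial
  obtain ⟨s, ⟨hs₁, hs₂⟩, rfl⟩ := hy
  have hs : |s| ≤ 1 := abs_le.2 ⟨hs₁, by linarith⟩
  rw [← AddCircle.coe_nsmul, norm_coe_addCircle_two hs,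
    hMap_eq_norm_coe_two_mul ⟨abs_nonneg s, hs⟩, nsmul_eq_mul, Nat.cast_ofNat]
  rcases abs_cases s with ⟨h, -⟩ | ⟨h, -⟩ <;> rw [h]
  rw [mul_neg, AddCircle.coe_neg, norm_neg]

theorem hMap_iterate_norm (n : ℕ) (y : AddCircle (2 : ℝ)) : hMap^[n] ‖y‖ = ‖2 ^ n • y‖ := by
  have h : Function.Semiconj (‖·‖) (fun y : AddCircle (2 : ℝ) => 2 • y) hMap :=
    fun y => (hMap_norm y).symm
  rw [← h.iterate_right n y, smul_iterate]

theorem eventually_Icc_subset_hMap_iterate_image_Ioo {u v : ℝ} (huv : u < v) (hu : 0 ≤ u)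
    (hv : v ≤ 1) : ∀ᶠ n in atTop, Icc 0 1 ⊆ hMap^[n] '' Ioo u v := by
  have hlarge : ∀ᶠ n : ℕ in atTop, 2 < (2 : ℝ) ^ n * (v - u) :=
    ((tendsto_pow_atTop_atTop_of_one_lt one_lt_two).atTop_mul_const
      (sub_pos.2 huv)).eventually_gt_atTop 2
  filter_upwards [hlarge] with n hn t ht
  obtain ⟨z, hz, hzt⟩ := AddCircle.exists_mem_Ioo_nsmul_coe_eq two_pos (m := 2 ^ n)
    (by exact_mod_cast hn) (t : AddCircle (2 : ℝ))
  refine ⟨z, hz, ?_⟩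
  rw [← norm_coe_addCircle_two_of_mem_Icc ⟨hu.trans hz.1.le, hz.2.le.trans hv⟩,
    hMap_iterate_norm, hzt, norm_coe_addCircle_two_of_mem_Icc ht]

theorem hMap_iterate_mem_Icc {x : ℝ} (hx : x ∈ 𝕀) (n : ℕ) : hMap^[n] x ∈ 𝕀 :=
  (mapsTo_hMap.mono_right (Icc_subset_Icc (by norm_num) le_rfl)).iterate n hx

theorem eventually_range_hMap_iterate_subset :
    ∀ᶠ n in atTop, range (hMap^[n] ∘ Subtype.val : 𝕀 → ℝ) ⊆ Icc 0 1 := by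
  refine eventually_atTop.2 ⟨1, fun n hn => range_subset_iff.2 fun y => ?_⟩
  rw [Function.comp_apply, ← Nat.sub_add_cancel hn, Function.iterate_succ_apply']
  exact mapsTo_hMap (hMap_iterate_mem_Icc y.2 _)

theorem eventually_Icc_subset_hMap_iterate_image {W : Set 𝕀} (hW : IsOpen W)
    (hne : W.Nonempty) :
    ∀ᶠ n in atTop, Icc 0 1 ⊆ (hMap^[n] ∘ Subtype.val) '' W := by
  have : Nontrivial 𝕀 :=
    nontrivial_coe_sort.2 ⟨0, by norm_num, 1, by norm_num, zero_ne_one⟩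
  obtain ⟨a, b, hab, hsub⟩ := hW.exists_Ioo_subset hne
  have hab' : (a : ℝ) < b := hab
  have hmem : ∀ z ∈ Ioo (a : ℝ) b, ∃ y ∈ W, (y : ℝ) = z := fun z hz =>
    ⟨⟨z, a.2.1.trans hz.1.le, hz.2.le.trans b.2.2⟩, hsub hz, rfl⟩
  rcases le_or_gt (b : ℝ) 0 with hb | hb
  · -- `h` maps `Ioo a b ⊆ [-1/2, 0]` onto `Ioo (-b) (-a) ⊆ [0, 1/2]` by `z ↦ -z`
    have h := eventually_Icc_subset_hMap_iterate_image_Ioo (neg_lt_neg hab') (neg_nonneg.2 hb)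
      (by linarith [a.2.1])
    filter_upwards [(tendsto_sub_atTop_nat 1).eventually h, eventually_ge_atTop 1]
      with n hn hn₁ t ht
    obtain ⟨z, hz, rfl⟩ := hn ht
    obtain ⟨y, hyW, hy⟩ := hmem (-z) ⟨by linarith [hz.2], by linarith [hz.1]⟩
    refine ⟨y, hyW, ?_⟩
    conv_lhs => rw [← Nat.sub_add_cancel hn₁]
    rw [Function.comp_apply, Function.iterate_succ_apply, hy,
      hMap_neg ((neg_nonneg.2 hb).trans hz.1.le)]
  · filter_upwards [eventually_Icc_subset_hMap_iterate_image_Ioo (max_lt hab' hb)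
      (le_max_right _ 0) b.2.2] with n hn t ht
    obtain ⟨z, hz, rfl⟩ := hn ht
    obtain ⟨y, hyW, rfl⟩ := hmem z ⟨(le_max_left _ _).trans_lt hz.1, hz.2⟩
    exact ⟨y, hyW, rfl⟩

theorem eventually_range_hMap_iterate_subset_image {W : Set 𝕀}
    (hW : IsOpen W) (hne : W.Nonempty) :
    ∀ᶠ n in atTop,
      range (hMap^[n] ∘ Subtype.val : 𝕀 → ℝ) ⊆ (hMap^[n] ∘ Subtype.val) '' W :=
  ((eventually_Icc_subset_hMap_iterate_image hW hne).and eventually_range_hMap_iterate_subset).mono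
    fun _ h => h.2.trans h.1

theorem eventually_exists_lt_dist_hMap_iterate :
    ∀ᶠ n in atTop, ∀ p ∈ range (hMap^[n] ∘ Subtype.val : 𝕀 → ℝ),
      ∃ q ∈ range (hMap^[n] ∘ Subtype.val : 𝕀 → ℝ), 1 / 4 < dist p q := by
  filter_upwards [eventually_Icc_subset_hMap_iterate_image isOpen_univ ⟨⟨0, by norm_num⟩, trivial⟩,
    eventually_range_hMap_iterate_subset] with n hsub hrange p hp
  obtain ⟨hp₀, hp₁⟩ := hrange hp
  rcases le_total p (1 / 2) with h | h
  · refine ⟨1, image_subset_range _ _ (hsub ⟨zero_le_one, le_rfl⟩), ?_⟩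
    rw [Real.dist_eq, abs_of_nonpos (by linarith)]
    linarith
  · refine ⟨0, image_subset_range _ _ (hsub ⟨le_rfl, zero_le_one⟩), ?_⟩
    rw [Real.dist_eq, abs_of_nonneg (by linarith)]
    linarith

/-- `h` is chaotic on `[-1/2,1]`: there exists `δ > 0` such that for every
`x ∈ [-1/2,1]` and every nonempty (relatively) open subset `V` of `[-1/2,1]`
there is `y ∈ V` with `limsup |hⁿx - hⁿy| ≥ δ` and `liminf |hⁿx - hⁿy| = 0`. -/
theorem hMap_chaotic :
    ∃ δ : ℝ, 0 < δ ∧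
      ∀ x ∈ Set.Icc (-(1 / 2) : ℝ) 1, ∀ V : Set ℝ, V ⊆ Set.Icc (-(1 / 2) : ℝ) 1 →
        (∃ U : Set ℝ, IsOpen U ∧ V = Set.Icc (-(1 / 2) : ℝ) 1 ∩ U) → V.Nonempty →
        ∃ y ∈ V,
          δ ≤ limsup (fun n => |hMap^[n] x - hMap^[n] y|) atTop ∧
          liminf (fun n => |hMap^[n] x - hMap^[n] y|) atTop = 0 := by
  refine ⟨1 / 4, by norm_num, ?_⟩
  rintro x hx V - ⟨U, hU, rfl⟩ ⟨y₀, hy₀⟩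
  obtain ⟨y, hyU, hnear, hfar⟩ := exists_mem_frequently_dist_lt_and_frequently_lt_dist
    (fun n => (continuous_hMap.iterate n).comp continuous_subtype_val)
    (fun _ => eventually_range_hMap_iterate_subset_image) eventually_exists_lt_dist_hMap_iterate
    ⟨x, hx⟩ (hU.preimage continuous_subtype_val) ⟨⟨y₀, hy₀.1⟩, hy₀.2⟩
  have hbound : ∀ n, |hMap^[n] x - hMap^[n] y| ≤ 3 / 2 := fun n => by
    obtain ⟨hx₁, hx₂⟩ := hMap_iterate_mem_Icc hx n
    obtain ⟨hy₁, hy₂⟩ := hMap_iterate_mem_Icc y.2 n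
    exact abs_sub_le_iff.2 ⟨by linarith, by linarith⟩
  exact ⟨y, ⟨y.2, hyU⟩,
    le_limsup_of_frequently_le (hfar.mono fun _ h => h.le) (isBoundedUnder_of ⟨3 / 2, hbound⟩),
    liminf_eq_zero_of_frequently_lt (fun _ => abs_nonneg _) hbound hnear⟩
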